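/- arXiv:math/0207298 — 4 statements merged into one kernel-verified Lean document; each statement's English description precedes it below -/
import Mathlib

section
/- Let d > 0 be a real number and let (a_j)_{j≥0} be a sequence of nonnegative real numbers satisfying a_{j+1} ≤ d·a_j for all j ≥ 0. Suppose the sequence (Σ_{j=0}^{k−1} a_j)/(Σ_{j=0}^{k−1} d^j) converges to a real number K as k → ∞. Then K ≤ a_0, and K = a_0 if and only if a_{j+1} = d·a_j for every j ≥ 0. -/
open Filter Finset

/-- Let `d > 0` and let `(a j)` be nonnegative reals with `a (j+1) ≤ d * a j`.
If `(∑_{j<k} a j) / (∑_{j<k} d^j) → K`, then `K ≤ a 0`, with equality if and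
only if `a (j+1) = d * a j` for every `j`. -/
theorem curvature_le_first_term (d : ℝ) (hd : 0 < d) (a : ℕ → ℝ)
    (ha : ∀ j, 0 ≤ a j) (hrec : ∀ j, a (j + 1) ≤ d * a j) (K : ℝ)
    (hK : Tendsto (fun k => (∑ j ∈ Finset.range k, a j) / (∑ j ∈ Finset.range k, d ^ j))
      atTop (nhds K)) :
    K ≤ a 0 ∧ (K = a 0 ↔ ∀ j, a (j + 1) = d * a j) := by
  set S : ℕ → ℝ := fun k => ∑ j ∈ Finset.range k, d ^ j with hSdef
  have hSpos : ∀ k, 1 ≤ k → (1:ℝ) ≤ S k := by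
    intro k hk
    calc (1:ℝ) = d ^ 0 := by simp
      _ ≤ S k := Finset.single_le_sum (f := fun j => d ^ j)
          (fun j _ => by positivity) (Finset.mem_range.mpr hk)
  have hle : ∀ j, a j ≤ d ^ j * a 0 := by
    intro j; induction j with
    | zero => simp
    | succ n ih =>
      calc a (n+1) ≤ d * a n := hrec n
        _ ≤ d * (d ^ n * a 0) := mul_le_mul_of_nonneg_left ih hd.le
        _ = d ^ (n+1) * a 0 := by ring
  have hsum_le : ∀ k, (∑ j ∈ Finset.range k, a j) ≤ a 0 * S k := by
    intro k
    calc (∑ j ∈ Finset.range k, a j) ≤ ∑ j ∈ Finset.range k, d ^ j * a 0 :=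
        Finset.sum_le_sum fun j _ => hle j
      _ = a 0 * S k := by rw [hSdef, Finset.mul_sum]; exact Finset.sum_congr rfl fun j _ => by ring
  have hratio_le : ∀ k, 1 ≤ k → (∑ j ∈ Finset.range k, a j) / S k ≤ a 0 := by
    intro k hk
    rw [div_le_iff₀ (by linarith [hSpos k hk])]
    calc (∑ j ∈ Finset.range k, a j) ≤ a 0 * S k := hsum_le k
      _ = a 0 * S k := rfl
  have hKle : K ≤ a 0 :=
    le_of_tendsto hK (Filter.eventually_atTop.mpr ⟨1, hratio_le⟩)
  refine ⟨hKle, ?_, ?_⟩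
  · -- K = a 0 → recursion is equality
    intro hKeq
    by_contra hne
    push_neg at hne
    obtain ⟨j0, hj0⟩ := hne
    have hstrict : a (j0 + 1) < d * a j0 := lt_of_le_of_ne (hrec j0) hj0
    set ε : ℝ := d * a j0 - a (j0 + 1) with hεdef
    have hε : 0 < ε := by linarith
    set m : ℕ := j0 + 1 with hmdef
    set b : ℕ → ℝ := fun j => d ^ j * a 0 - a j with hbdef
    have hb0 : ∀ j, 0 ≤ b j := fun j => by simp only [hbdef]; linarith [hle j]
    have hbrec : ∀ j, d * b j ≤ b (j + 1) := by
      intro j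
      simp only [hbdef, pow_succ]
      nlinarith [hrec j]
    have hbm : ε ≤ b m := by
      have h1 : a j0 ≤ d ^ j0 * a 0 := hle j0
      have h2 : d * a j0 ≤ d ^ (j0 + 1) * a 0 := by
        calc d * a j0 ≤ d * (d ^ j0 * a 0) := mul_le_mul_of_nonneg_left h1 hd.le
          _ = d ^ (j0 + 1) * a 0 := by ring
      simp only [hbdef, hmdef]
      linarith
    have hbgrow : ∀ i, ε * d ^ i ≤ b (i + m) := by
      intro i; induction i with
      | zero => simpa using hbm
      | succ n ih =>
        have : d * (ε * d ^ n) ≤ d * b (n + m) := mul_le_mul_of_nonneg_left ih hd.le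
        calc ε * d ^ (n + 1) = d * (ε * d ^ n) := by ring
          _ ≤ d * b (n + m) := this
          _ ≤ b (n + m + 1) := hbrec (n + m)
          _ = b (n + 1 + m) := by ring_nf
    have hsumb : ∀ k, m ≤ k → ε * S (k - m) ≤ ∑ j ∈ Finset.range k, b j := by
      intro k hk
      have h1 : ∑ j ∈ Finset.Ico m k, b j ≤ ∑ j ∈ Finset.range k, b j := by
        apply Finset.sum_le_sum_of_subset_of_nonneg
        · intro x hx
          simp only [Finset.mem_Ico] at hx
          exact Finset.mem_range.mpr hx.2
        · intro x _ _; exact hb0 x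
      have h2 : ∑ j ∈ Finset.Ico m k, b j = ∑ i ∈ Finset.range (k - m), b (m + i) :=
        Finset.sum_Ico_eq_sum_range b m k
      have h3 : ε * S (k - m) ≤ ∑ i ∈ Finset.range (k - m), b (m + i) := by
        rw [hSdef, Finset.mul_sum]
        apply Finset.sum_le_sum
        intro i _
        have := hbgrow i
        rw [add_comm m i] at *
        linarith [hbgrow i]
      linarith
    -- growth of S
    have hstep : ∀ k, 1 ≤ k → S (k + 1) ≤ (1 + d) * S k := by
      intro k hk
      obtain ⟨n, rfl⟩ := Nat.exists_eq_add_of_le hk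
      have hlast : d ^ n ≤ S (1 + n) := by
        apply Finset.single_le_sum (f := fun j => d ^ j) (fun j _ => by positivity)
        exact Finset.mem_range.mpr (by omega)
      have hSsucc : S (1 + n + 1) = S (1 + n) + d ^ (1 + n) := by
        simp [hSdef, Finset.sum_range_succ]
      have : d ^ (1 + n) = d * d ^ n := by ring
      nlinarith [hSpos (1 + n) (by omega)]
    have hgrow : ∀ n k, 1 ≤ k → S (k + n) ≤ (1 + d) ^ n * S k := by
      intro n
      induction n with
      | zero => intro k hk; simp
      | succ p ih =>
        intro k hk
        have h1 : S (k + p + 1) ≤ (1 + d) * S (k + p) := hstep (k + p) (by omega)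
        have h2 : S (k + p) ≤ (1 + d) ^ p * S k := ih k hk
        have hd1 : (0:ℝ) < 1 + d := by linarith
        calc S (k + (p + 1)) = S (k + p + 1) := by ring_nf
          _ ≤ (1 + d) * S (k + p) := h1
          _ ≤ (1 + d) * ((1 + d) ^ p * S k) := mul_le_mul_of_nonneg_left h2 hd1.le
          _ = (1 + d) ^ (p + 1) * S k := by ring
    set C : ℝ := (1 + d) ^ m with hCdef
    have hC : 0 < C := by positivity
    have hfinal : ∀ k, m + 1 ≤ k → (∑ j ∈ Finset.range k, a j) / S k ≤ a 0 - ε / C := by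
      intro k hk
      have hkm : 1 ≤ k - m := by omega
      have hSk : S k ≤ C * S (k - m) := by
        have := hgrow m (k - m) hkm
        rwa [Nat.sub_add_cancel (by omega)] at this
      have hSk1 : (1:ℝ) ≤ S k := hSpos k (by omega)
      have hSkm1 : (1:ℝ) ≤ S (k - m) := hSpos (k - m) hkm
      have hsb : ε * S (k - m) ≤ ∑ j ∈ Finset.range k, b j := hsumb k (by omega)
      have hsumeq : ∑ j ∈ Finset.range k, b j = a 0 * S k - ∑ j ∈ Finset.range k, a j := by
        simp only [hbdef, hSdef, Finset.sum_sub_distrib, Finset.mul_sum]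
        congr 1
        exact Finset.sum_congr rfl fun j _ => by ring
      rw [div_le_iff₀ (by linarith)]
      have key : ε * S k ≤ ε * (C * S (k - m)) := mul_le_mul_of_nonneg_left hSk hε.le
      have hεC : ε / C * S k ≤ ε * S (k - m) := by
        rw [div_mul_eq_mul_div, div_le_iff₀ hC]
        nlinarith
      nlinarith
    have hKle2 : K ≤ a 0 - ε / C :=
      le_of_tendsto hK (Filter.eventually_atTop.mpr ⟨m + 1, hfinal⟩)
    have : 0 < ε / C := div_pos hε hC
    linarith [hKeq ▸ hKle2]
  · -- equality recursion → K = a 0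
    intro h
    have haj : ∀ j, a j = d ^ j * a 0 := by
      intro j; induction j with
      | zero => simp
      | succ n ih => rw [h n, ih]; ring
    have hconst : Tendsto (fun k => (∑ j ∈ Finset.range k, a j) / S k) atTop (nhds (a 0)) := by
      have heq : (fun k => (∑ j ∈ Finset.range k, a j) / S k) =ᶠ[atTop] (fun _ => a 0) := by
        filter_upwards [eventually_ge_atTop 1] with k hk
        have hsum : (∑ j ∈ Finset.range k, a j) = a 0 * S k := by
          rw [hSdef, Finset.mul_sum]
          exact Finset.sum_congr rfl fun j _ => by rw [haj j]; ring
        rw [hsum, mul_div_assoc, div_self (by linarith [hSpos k hk]), mul_one]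
      exact Tendsto.congr' heq.symm tendsto_const_nhds
    exact tendsto_nhds_unique hK hconst
end

section
/- Let H be a complex Hilbert space and let t_1, …, t_n be bounded linear operators on H satisfying Σ_{i=1}^n t_i t_i* ≤ 1. Let d be the complex vector-space dimension of span_ℂ{t_1, …, t_n} in B(H). Then Σ_{i=1}^n t_i* t_i ≤ d·1. -/
open Finset ContinuousLinearMap
open scoped InnerProductSpace

/-!
Fix `x : H`. The vectors `tᵢ x` lie in the image `W` of `span {tᵢ}` under evaluation at `x`,
so `dim W ≤ d`. Expanding each `tᵢ x` in an orthonormal basis `(e_k)` of `W` gives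
`∑ᵢ ‖tᵢ x‖² = ∑ₖ ∑ᵢ |⟪tᵢ* e_k, x⟫|² ≤ ∑ₖ (∑ᵢ ‖tᵢ* e_k‖²) ‖x‖²`, and `∑ tᵢ tᵢ* ≤ 1` bounds each
inner sum by `‖e_k‖² = 1`.
-/

namespace ContinuousLinearMap

variable {𝕜 E : Type*} [RCLike 𝕜] [NormedAddCommGroup E] [InnerProductSpace 𝕜 E]

theorem reApplyInnerSelf_le_of_le {S T : E →L[𝕜] E} (h : S ≤ T) (x : E) :
    S.reApplyInnerSelf x ≤ T.reApplyInnerSelf x := by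
  simpa [reApplyInnerSelf_apply, inner_sub_left] using ((le_def S T).mp h).re_inner_nonneg_left x

theorem le_of_forall_reApplyInnerSelf_le [CompleteSpace E] {S T : E →L[𝕜] E} (hS : IsSelfAdjoint S)
    (hT : IsSelfAdjoint T) (h : ∀ x, S.reApplyInnerSelf x ≤ T.reApplyInnerSelf x) : S ≤ T := by
  rw [le_def, isPositive_def']
  refine ⟨hT.sub hS, fun x => ?_⟩
  simpa [reApplyInnerSelf_apply, inner_sub_left] using h x

theorem reApplyInnerSelf_natCast (m : ℕ) (x : E) :
    (m : E →L[𝕜] E).reApplyInnerSelf x = m * ‖x‖ ^ 2 := by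
  simp [reApplyInnerSelf_apply, ← Nat.cast_smul_eq_nsmul 𝕜, inner_smul_left,
    inner_self_eq_norm_sq_to_K]

variable [CompleteSpace E] {ι : Type*} [Fintype ι]

theorem reApplyInnerSelf_sum_star_mul_self (t : ι → E →L[𝕜] E) (x : E) :
    (∑ i, star (t i) * t i).reApplyInnerSelf x = ∑ i, ‖t i x‖ ^ 2 := by
  simp [reApplyInnerSelf_apply, sum_inner, map_sum, apply_norm_sq_eq_inner_adjoint_left,
    star_eq_adjoint, mul_def]

theorem sum_norm_sq_star_apply_le_of_sum_mul_star_le_one {t : ι → E →L[𝕜] E}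
    (h : ∑ i, t i * star (t i) ≤ 1) (y : E) : ∑ i, ‖star (t i) y‖ ^ 2 ≤ ‖y‖ ^ 2 := by
  calc ∑ i, ‖star (t i) y‖ ^ 2
      = (∑ i, star (star (t i)) * star (t i)).reApplyInnerSelf y :=
        (reApplyInnerSelf_sum_star_mul_self _ y).symm
    _ ≤ (1 : E →L[𝕜] E).reApplyInnerSelf y := by simpa using reApplyInnerSelf_le_of_le h y
    _ = ‖y‖ ^ 2 := by simpa using reApplyInnerSelf_natCast (𝕜 := 𝕜) 1 y

theorem sum_norm_sq_apply_le_finrank_mul {t : ι → E →L[𝕜] E}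
    (hrow : ∀ y, ∑ i, ‖star (t i) y‖ ^ 2 ≤ ‖y‖ ^ 2) {W : Submodule 𝕜 E} [FiniteDimensional 𝕜 W]
    {x : E} (hW : ∀ i, t i x ∈ W) : ∑ i, ‖t i x‖ ^ 2 ≤ Module.finrank 𝕜 W * ‖x‖ ^ 2 := by
  let b := stdOrthonormalBasis 𝕜 W
  have parseval (i : ι) : ‖t i x‖ ^ 2 = ∑ k, ‖⟪(b k : E), t i x⟫_𝕜‖ ^ 2 := by
    simpa using (b.sum_sq_norm_inner_right ⟨t i x, hW i⟩).symm
  calc ∑ i, ‖t i x‖ ^ 2 = ∑ k, ∑ i, ‖⟪star (t i) (b k), x⟫_𝕜‖ ^ 2 := by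
        simp_rw [parseval, star_eq_adjoint, adjoint_inner_left]; exact sum_comm
    _ ≤ ∑ k, (∑ i, ‖star (t i) (b k)‖ ^ 2) * ‖x‖ ^ 2 := by
        simp_rw [sum_mul, ← mul_pow]; gcongr; exact norm_inner_le_norm _ _
    _ ≤ ∑ k, ‖(b k : E)‖ ^ 2 * ‖x‖ ^ 2 := by gcongr; exact hrow _
    _ = Module.finrank 𝕜 W * ‖x‖ ^ 2 := by
      have (k : _) : ‖(b k : E)‖ = 1 := b.orthonormal.1 k
      simp [this]

end ContinuousLinearMap

/-- If `t_1, …, t_n` are bounded operators on a complex Hilbert space `H` with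
`∑ tᵢ tᵢ* ≤ 1`, and `d` is the complex dimension of `span {t_1, …, t_n}` in `B(H)`,
then `∑ tᵢ* tᵢ ≤ d • 1` (in the Loewner order). -/
theorem sum_adjoint_mul_self_le_dim
    {H : Type*} [NormedAddCommGroup H] [InnerProductSpace ℂ H] [CompleteSpace H]
    (n : ℕ) (t : Fin n → H →L[ℂ] H)
    (hcontr : ∑ i, t i * star (t i) ≤ 1)
    (d : ℕ) (hd : d = Module.finrank ℂ (Submodule.span ℂ (Set.range t))) :
    ∑ i, star (t i) * t i ≤ (d : H →L[ℂ] H) := by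
  have hrow := sum_norm_sq_star_apply_le_of_sum_mul_star_le_one hcontr
  refine le_of_forall_reApplyInnerSelf_le (isSelfAdjoint_sum _ fun i _ => .star_mul_self (t i))
    (.natCast d) fun x => ?_
  rw [reApplyInnerSelf_sum_star_mul_self, reApplyInnerSelf_natCast, hd]
  set V := Submodule.span ℂ (Set.range t)
  have : FiniteDimensional ℂ V := FiniteDimensional.span_of_finite ℂ (Set.finite_range t)
  let ev := (ContinuousLinearMap.apply ℂ H x : (H →L[ℂ] H) →ₗ[ℂ] H)
  calc ∑ i, ‖t i x‖ ^ 2 ≤ Module.finrank ℂ (V.map ev) * ‖x‖ ^ 2 :=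
        sum_norm_sq_apply_le_finrank_mul hrow fun i =>
          Submodule.mem_map_of_mem (Submodule.subset_span ⟨i, rfl⟩)
    _ ≤ Module.finrank ℂ V * ‖x‖ ^ 2 := by gcongr; exact Submodule.finrank_map_le _ _
end

section
/- Assume at least one t_i is nonzero, so that d ≥ 1. Then the sequence Tr(1 − Θ^k(1))/(Σ_{j=0}^{k−1} d^j) converges in [0,∞] to a limit K as k → ∞; moreover K ≤ Tr(1 − Θ(1)), and K = ∞ if and only if Tr(1 − Θ(1)) = ∞. -/
/-!
Choosing a basis of `span {tᵢ}` and balancing it by the square root of the Gram matrix of the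
coefficients writes `Θ` with exactly `d` Kraus operators `rⱼ`. Each `rⱼ` is a contraction, so
`Tr (r x r*) ≤ Tr x` for `x ≥ 0`, and the positive operators `Dⱼ = Θʲ (1 - Θ 1)` satisfy
`Tr D_{j+1} ≤ d · Tr Dⱼ`. As `1 - Θᵏ 1 = ∑_{j<k} Dⱼ`, the quotient is the average, with weights
`dʲ`, of the antitone sequence `Tr Dⱼ / dʲ`; these weights sum to `∞`, so it converges to the
infimum of that sequence, which is at most `Tr D₀ = Tr (1 - Θ 1)`. If `Tr D₀ = ∞`, every quotient
is `∞`.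
-/

open Filter Finset ContinuousLinearMap
open scoped ENNReal

/-- The trace (in `[0,∞]`) of an operator on a complex Hilbert space, computed in a
Hilbert (orthonormal) basis `b`: `Tr A = ∑ᵢ ⟨bᵢ, A bᵢ⟩` (real part, clamped to `[0,∞]`).
For a positive operator this is the usual trace, independent of the choice of basis. -/
noncomputable def opTrace {H : Type*} [NormedAddCommGroup H] [InnerProductSpace ℂ H]
    [CompleteSpace H] {ι : Type*} (b : HilbertBasis ι ℂ H) (A : H →L[ℂ] H) : ℝ≥0∞ :=
  ∑' i, ENNReal.ofReal (inner ℂ (b i) (A (b i)) : ℂ).re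

open scoped Topology Matrix ComplexOrder

theorem sub_iterate_eq_sum_range {M : Type*} [AddCommGroup M] (f : M →+ M) (x : M) (k : ℕ) :
    x - f^[k] x = ∑ j ∈ range k, f^[j] (x - f x) := by
  induction k with
  | zero => simp
  | succ k ih =>
    rw [sum_range_succ, ← ih, iterate_map_sub, ← Function.iterate_succ_apply]
    abel

namespace ENNReal

theorem tendsto_sum_mul_div_sum_of_antitone {c w : ℕ → ℝ≥0∞} (hc : Antitone c)
    (hc0 : c 0 ≠ ∞) (hw : ∀ j, w j ≠ ∞)
    (hW : Tendsto (fun k => ∑ j ∈ range k, w j) atTop (𝓝 ∞)) :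
    Tendsto (fun k => (∑ j ∈ range k, c j * w j) / ∑ j ∈ range k, w j) atTop
      (𝓝 (⨅ j, c j)) := by
  have hWfin : ∀ k, ∑ j ∈ range k, w j ≠ ∞ := fun k => sum_ne_top.2 fun j _ => hw j
  refine tendsto_order.2 ⟨fun a ha => ?_, fun a ha => ?_⟩
  · filter_upwards [hW.eventually_ne zero_ne_top.symm] with k hk
    refine ha.trans_le ((ENNReal.le_div_iff_mul_le (.inl hk) (.inl (hWfin k))).2 ?_)
    rw [mul_sum]
    exact sum_le_sum fun j _ => mul_le_mul_left (iInf_le c j) _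
  · obtain ⟨m, hm⟩ := iInf_lt_iff.1 ha
    -- terms with `j ≥ m` are at most `c m * w j`, the others add up to a fixed finite `B`
    set B := ∑ j ∈ range m, (c j - c m) * w j
    have hB : B ≠ ∞ := sum_ne_top.2 fun j _ =>
      mul_ne_top (ne_top_of_le_ne_top hc0 (tsub_le_self.trans (hc (Nat.zero_le j)))) (hw j)
    have hbound : ∀ k, ∑ j ∈ range k, c j * w j ≤ B + c m * ∑ j ∈ range k, w j := by
      intro k
      calc ∑ j ∈ range k, c j * w j
          ≤ ∑ j ∈ range k, ((c j - c m) * w j + c m * w j) :=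
            sum_le_sum fun j _ => by rw [← add_mul]; exact mul_le_mul_left le_tsub_add _
        _ ≤ B + c m * ∑ j ∈ range k, w j := by
            rw [sum_add_distrib, mul_sum]
            gcongr
            calc ∑ j ∈ range k, (c j - c m) * w j
                ≤ ∑' j, (c j - c m) * w j := ENNReal.sum_le_tsum _
              _ = B := tsum_eq_sum fun j hj => by
                  rw [tsub_eq_zero_of_le (hc (not_lt.1 (mem_range.not.1 hj))), zero_mul]
    have hlim : Tendsto (fun k => B / ∑ j ∈ range k, w j + c m) atTop (𝓝 (c m)) := by
      simpa [div_eq_mul_inv] using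
        (ENNReal.Tendsto.const_mul (_root_.tendsto_inv_iff.2 hW) (.inr hB)).add_const (c m)
    filter_upwards [hlim.eventually (gt_mem_nhds hm), hW.eventually_ne zero_ne_top.symm]
      with k hk hk0
    refine lt_of_le_of_lt ?_ hk
    calc (∑ j ∈ range k, c j * w j) / ∑ j ∈ range k, w j
        ≤ (B + c m * ∑ j ∈ range k, w j) / ∑ j ∈ range k, w j :=
          ENNReal.div_le_div_right (hbound k) _
      _ = B / ∑ j ∈ range k, w j + c m := by
        rw [ENNReal.add_div, mul_div_assoc, ENNReal.div_self hk0 (hWfin k), _root_.mul_one]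

theorem exists_tendsto_sum_div_sum_pow {d : ℝ≥0∞} (hd1 : 1 ≤ d) (hd : d ≠ ∞)
    {β : ℕ → ℝ≥0∞} (hβ : ∀ j, β (j + 1) ≤ d * β j) :
    ∃ K ≤ β 0, (K = ∞ ↔ β 0 = ∞) ∧
      Tendsto (fun k => (∑ j ∈ range k, β j) / ∑ j ∈ range k, d ^ j) atTop (𝓝 K) := by
  have hpow0 : ∀ j, d ^ j ≠ 0 := fun j => pow_ne_zero j (one_pos.trans_le hd1).ne'
  have hpow : ∀ j, d ^ j ≠ ∞ := fun j => pow_ne_top hd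
  have hW : ∀ k, ∑ j ∈ range k, d ^ j ≠ ∞ := fun k => sum_ne_top.2 fun j _ => hpow j
  by_cases hβ0 : β 0 = ∞
  · refine ⟨∞, hβ0.ge, by simp [hβ0], tendsto_const_nhds.congr' ?_⟩
    filter_upwards [eventually_ge_atTop 1] with k hk
    have : ∑ j ∈ range k, β j = ∞ :=
      top_le_iff.1 (hβ0 ▸ single_le_sum (fun j _ => zero_le) (mem_range.2 hk))
    rw [this, top_div_of_ne_top (hW k)]
  set c : ℕ → ℝ≥0∞ := fun j => β j / d ^ j
  have hc : Antitone c := antitone_nat_of_succ_le fun j => calc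
    β (j + 1) / d ^ (j + 1) ≤ d * β j / (d * d ^ j) := by
        rw [← pow_succ']; exact ENNReal.div_le_div_right (hβ j) _
    _ = β j / d ^ j := ENNReal.mul_div_mul_left _ _ (by simpa using hpow0 1) hd
  have hK : ⨅ j, c j ≤ β 0 := (iInf_le c 0).trans_eq (by simp [c])
  refine ⟨⨅ j, c j, hK, iff_of_false (ne_top_of_le_ne_top hβ0 hK) hβ0, ?_⟩
  have hβc : ∀ j, β j = c j * d ^ j := fun j => (ENNReal.div_mul_cancel (hpow0 j) (hpow j)).symm
  simp_rw [hβc]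
  refine tendsto_sum_mul_div_sum_of_antitone hc (by simpa [c] using hβ0) hpow
    (tendsto_nhds_top_mono tendsto_nat_nhds_top (Eventually.of_forall fun k => ?_))
  calc (k : ℝ≥0∞) = ∑ _j ∈ range k, 1 := by simp
    _ ≤ ∑ j ∈ range k, d ^ j := sum_le_sum fun j _ => one_le_pow₀ hd1

end ENNReal

theorem finrank_span_range_pos {K V ι : Type*} [DivisionRing K] [AddCommGroup V] [Module K V]
    [Finite ι] {t : ι → V} (h : ∃ i, t i ≠ 0) :
    0 < Module.finrank K (Submodule.span K (Set.range t)) := by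
  obtain ⟨i, hi⟩ := h
  have := FiniteDimensional.span_of_finite K (Set.finite_range t)
  rw [Nat.pos_iff_ne_zero, Ne, Submodule.finrank_eq_zero, Submodule.span_eq_bot]
  exact fun h => hi (h _ ⟨i, rfl⟩)

open scoped MatrixOrder in
theorem Matrix.exists_conjTranspose_mul_self_eq {n m : Type*} [Fintype n] [Fintype m]
    [DecidableEq m] (B : Matrix n m ℂ) : ∃ C : Matrix m m ℂ, Cᴴ * C = Bᴴ * B := by
  refine ⟨CFC.sqrt (Bᴴ * B), ?_⟩
  have h0 : 0 ≤ Bᴴ * B :=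
    Matrix.nonneg_iff_posSemidef.2 (Matrix.posSemidef_conjTranspose_mul_self B)
  rw [← Matrix.star_eq_conjTranspose, (CFC.sqrt_nonneg (Bᴴ * B)).isSelfAdjoint.star_eq,
    CFC.sqrt_mul_sqrt_self _ h0]

section Kraus

def krausMap {A : Type*} [NonUnitalNonAssocSemiring A] [StarRing A] {κ : Type*} [Fintype κ]
    (r : κ → A) : A →+ A where
  toFun x := ∑ i, r i * x * star (r i)
  map_zero' := by simp
  map_add' x y := by simp only [mul_add, add_mul, sum_add_distrib]

variable {A : Type*} [Ring A] [StarRing A] {κ : Type*} [Fintype κ]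

theorem krausMap_apply (r : κ → A) (x : A) : krausMap r x = ∑ i, r i * x * star (r i) := rfl

variable [Algebra ℂ A] [StarModule ℂ A]

theorem krausMap_linearCombination {m : Type*} [Fintype m] (a : Matrix κ m ℂ) (e : m → A)
    (x : A) :
    krausMap (fun i => ∑ j, a i j • e j) x
      = ∑ j, ∑ k, (aᴴ * a) k j • (e j * x * star (e k)) := by
  simp only [krausMap_apply, star_sum, star_smul, sum_mul, mul_sum, smul_mul_assoc,
    mul_smul_comm, smul_sum, smul_smul, Matrix.mul_apply, Matrix.conjTranspose_apply, sum_smul]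
  exact sum_comm.trans ((sum_congr rfl fun _ _ => sum_comm).trans sum_comm)

theorem exists_krausMap_eq_fin_finrank (t : κ → A) :
    ∃ r : Fin (Module.finrank ℂ (Submodule.span ℂ (Set.range t))) → A,
      krausMap t = krausMap r := by
  set S := Submodule.span ℂ (Set.range t)
  have : FiniteDimensional ℂ S := FiniteDimensional.span_of_finite ℂ (Set.finite_range t)
  let s := Module.finBasis ℂ S
  let a : Matrix κ _ ℂ := Matrix.of fun i j => s.repr ⟨t i, Submodule.subset_span ⟨i, rfl⟩⟩ j
  have ht : t = fun i => ∑ j, a i j • (s j : A) := by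
    funext i
    have := congrArg Subtype.val (s.sum_repr ⟨t i, Submodule.subset_span ⟨i, rfl⟩⟩)
    simp only [Submodule.coe_sum, Submodule.coe_smul] at this
    exact this.symm
  obtain ⟨C, hC⟩ := Matrix.exists_conjTranspose_mul_self_eq a
  refine ⟨fun l => ∑ k, C l k • (s k : A), AddMonoidHom.ext fun x => ?_⟩
  rw [ht, krausMap_linearCombination, krausMap_linearCombination, hC]

end Kraus

theorem CStarAlgebra.norm_le_one_of_mul_star_le_one {A : Type*} [CStarAlgebra A] [PartialOrder A]
    [StarOrderedRing A] {r : A} (h : r * star r ≤ 1) : ‖r‖ ≤ 1 := by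
  have : ‖r‖ * ‖r‖ ≤ 1 := by
    rw [← CStarRing.norm_self_mul_star]
    exact (norm_le_one_iff_of_nonneg _ (mul_star_self_nonneg r)).2 h
  nlinarith [norm_nonneg r]

theorem krausMap_mapsTo_Ici_zero {A : Type*} [Ring A] [PartialOrder A] [StarRing A]
    [StarOrderedRing A] {κ : Type*} [Fintype κ] (r : κ → A) :
    Set.MapsTo (krausMap r) (Set.Ici 0) (Set.Ici 0) := fun _ hx =>
  sum_nonneg fun i _ => star_right_conjugate_nonneg hx (r i)

theorem norm_le_one_of_krausMap_one_le {A : Type*} [CStarAlgebra A] [PartialOrder A]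
    [StarOrderedRing A] {κ : Type*} [Fintype κ] {r : κ → A} (h : krausMap r 1 ≤ 1) (i : κ) :
    ‖r i‖ ≤ 1 :=
  CStarAlgebra.norm_le_one_of_mul_star_le_one <|
    (single_le_sum (f := fun j => r j * star (r j)) (fun j _ => mul_star_self_nonneg (r j))
      (mem_univ i)).trans (by simpa [krausMap_apply] using h)

theorem HilbertBasis.ofReal_norm_sq_eq_tsum {ι H : Type*} [NormedAddCommGroup H]
    [InnerProductSpace ℂ H] (b : HilbertBasis ι ℂ H) (v : H) :
    ENNReal.ofReal (‖v‖ ^ 2) = ∑' i, ENNReal.ofReal (‖(inner ℂ (b i) v : ℂ)‖ ^ 2) := by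
  have h := lp.hasSum_norm (p := 2) (by norm_num) (b.repr v)
  simp only [ENNReal.toReal_ofNat, Real.rpow_two, b.repr_apply_apply, b.repr.norm_map] at h
  rw [← h.tsum_eq, ENNReal.ofReal_tsum_of_nonneg (fun _ => sq_nonneg _) h.summable]

section opTrace

variable {H : Type*} [NormedAddCommGroup H] [InnerProductSpace ℂ H] [CompleteSpace H]
  {ι : Type*} (b : HilbertBasis ι ℂ H)

theorem opTrace_add {A B : H →L[ℂ] H} (hA : 0 ≤ A) (hB : 0 ≤ B) :
    opTrace b (A + B) = opTrace b A + opTrace b B := by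
  rw [opTrace, opTrace, opTrace, ← ENNReal.tsum_add]
  refine tsum_congr fun i => ?_
  rw [add_apply, inner_add_right, Complex.add_re]
  exact ENNReal.ofReal_add ((nonneg_iff_isPositive A).1 hA |>.re_inner_nonneg_right _)
    ((nonneg_iff_isPositive B).1 hB |>.re_inner_nonneg_right _)

theorem opTrace_sum {γ : Type*} (s : Finset γ) {A : γ → H →L[ℂ] H} (hA : ∀ j ∈ s, 0 ≤ A j) :
    opTrace b (∑ j ∈ s, A j) = ∑ j ∈ s, opTrace b (A j) := by
  classical
  induction s using Finset.induction_on with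
  | empty => simp [opTrace]
  | insert a s ha ih =>
    rw [sum_insert ha, sum_insert ha, opTrace_add b (hA a (mem_insert_self a s))
      (sum_nonneg fun j hj => hA j (mem_insert_of_mem hj)),
      ih fun j hj => hA j (mem_insert_of_mem hj)]

theorem opTrace_star_mul_self (C : H →L[ℂ] H) :
    opTrace b (star C * C) = ∑' i, ENNReal.ofReal (‖C (b i)‖ ^ 2) := by
  refine tsum_congr fun i => ?_
  rw [mul_apply_eq_comp, star_eq_adjoint, adjoint_inner_right, ← RCLike.re_to_complex,
    inner_self_eq_norm_sq]

-- Parseval in both variables turns both sides into `∑ᵢ ∑ⱼ |⟪bⱼ, C bᵢ⟫|²`.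
theorem opTrace_mul_star_self (C : H →L[ℂ] H) :
    opTrace b (C * star C) = opTrace b (star C * C) := by
  have h := opTrace_star_mul_self b (star C)
  rw [star_star] at h
  rw [h, opTrace_star_mul_self]
  simp_rw [b.ofReal_norm_sq_eq_tsum (C _), b.ofReal_norm_sq_eq_tsum (star C _)]
  rw [ENNReal.tsum_comm]
  refine tsum_congr fun i => tsum_congr fun j => ?_
  rw [star_eq_adjoint, ← adjoint_inner_left, adjoint_adjoint, ← inner_conj_symm,
    RCLike.norm_conj]

theorem opTrace_conj_le {x : H →L[ℂ] H} (hx : 0 ≤ x) {r : H →L[ℂ] H} (hr : ‖r‖ ≤ 1) :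
    opTrace b (r * x * star r) ≤ opTrace b x := by
  set s := CFC.sqrt x
  have hs : star s = s := (CFC.sqrt_nonneg x).isSelfAdjoint.star_eq
  have hx_eq : x = star s * s := by rw [hs, CFC.sqrt_mul_sqrt_self x hx]
  calc opTrace b (r * x * star r) = opTrace b (star (r * s) * (r * s)) := by
        rw [← opTrace_mul_star_self, star_mul, hs, hx_eq, hs]; noncomm_ring
    _ = ∑' i, ENNReal.ofReal (‖r (s (b i))‖ ^ 2) := opTrace_star_mul_self b _
    _ ≤ ∑' i, ENNReal.ofReal (‖s (b i)‖ ^ 2) := by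
        gcongr with i
        exact (r.le_opNorm _).trans (mul_le_of_le_one_left (norm_nonneg _) hr)
    _ = opTrace b x := by rw [hx_eq, opTrace_star_mul_self]

theorem opTrace_krausMap_le {κ : Type*} [Fintype κ] {r : κ → H →L[ℂ] H} (hr : ∀ i, ‖r i‖ ≤ 1)
    {x : H →L[ℂ] H} (hx : 0 ≤ x) :
    opTrace b (krausMap r x) ≤ Fintype.card κ * opTrace b x := by
  rw [krausMap_apply, opTrace_sum b _ fun i _ => star_right_conjugate_nonneg hx (r i)]
  calc ∑ i, opTrace b (r i * x * star (r i)) ≤ ∑ _i : κ, opTrace b x :=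
        sum_le_sum fun i _ => opTrace_conj_le b hx (hr i)
    _ = Fintype.card κ * opTrace b x := by rw [sum_const, card_univ, nsmul_eq_mul]

end opTrace

/-- Existence of the curvature of the completely positive map `Θ x = ∑ tᵢ x tᵢ*` on
`B(H)`, where `∑ tᵢ tᵢ* ≤ 1` and some `tᵢ ≠ 0` (so `d = dim span {tᵢ} ≥ 1`): the
sequence `Tr(1 - Θ^k(1)) / ∑_{j<k} d^j` converges in `[0,∞]` to a limit `K`, with
`K ≤ Tr(1 - Θ(1))`, and `K = ∞` iff `Tr(1 - Θ(1)) = ∞`. -/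
theorem curvature_exists
    {H : Type*} [NormedAddCommGroup H] [InnerProductSpace ℂ H] [CompleteSpace H]
    {ι : Type*} (b : HilbertBasis ι ℂ H)
    (n : ℕ) (t : Fin n → H →L[ℂ] H)
    (hcontr : ∑ i, t i * star (t i) ≤ 1)
    (hne : ∃ i, t i ≠ 0)
    (Θ : (H →L[ℂ] H) → (H →L[ℂ] H))
    (hΘ : ∀ x, Θ x = ∑ i, t i * x * star (t i))
    (d : ℕ) (hd : d = Module.finrank ℂ (Submodule.span ℂ (Set.range t))) :
    ∃ K : ℝ≥0∞,
      Filter.Tendsto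
        (fun k => opTrace b (1 - Θ^[k] 1) / ∑ j ∈ Finset.range k, (d : ℝ≥0∞) ^ j)
        Filter.atTop (nhds K) ∧
      K ≤ opTrace b (1 - Θ 1) ∧
      (K = ⊤ ↔ opTrace b (1 - Θ 1) = ⊤) := by
  obtain ⟨r, hr⟩ : ∃ r : Fin d → H →L[ℂ] H, krausMap t = krausMap r :=
    hd ▸ exists_krausMap_eq_fin_finrank t
  have hΘr : Θ = krausMap r := funext fun x => by rw [hΘ, ← krausMap_apply, hr]
  subst hΘr
  have hΘ1 : krausMap r 1 ≤ 1 := by rw [← hr, krausMap_apply]; simpa only [mul_one] using hcontr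
  have hd1 : 1 ≤ d := hd ▸ finrank_span_range_pos hne
  have hD : 0 ≤ 1 - krausMap r 1 := sub_nonneg.2 hΘ1
  set β : ℕ → ℝ≥0∞ := fun j => opTrace b ((krausMap r)^[j] (1 - krausMap r 1))
  have hD_iter : ∀ j, 0 ≤ (krausMap r)^[j] (1 - krausMap r 1) := fun j =>
    (krausMap_mapsTo_Ici_zero r).iterate j hD
  have hβ : ∀ j, β (j + 1) ≤ d * β j := fun j => by
    simpa only [β, Function.iterate_succ_apply', Fintype.card_fin] using
      opTrace_krausMap_le b (norm_le_one_of_krausMap_one_le hΘ1) (hD_iter j)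
  have hnum : ∀ k, opTrace b (1 - (krausMap r)^[k] 1) = ∑ j ∈ range k, β j := fun k => by
    rw [sub_iterate_eq_sum_range, opTrace_sum b _ fun j _ => hD_iter j]
  obtain ⟨K, hK, hKtop, hlim⟩ := ENNReal.exists_tendsto_sum_div_sum_pow
    (by exact_mod_cast hd1) (ENNReal.natCast_ne_top _) hβ
  exact ⟨K, by simpa [hnum] using hlim, hK, hKtop⟩
end

section
/- Let t be a contraction on H with Tr(1 − tt*) < ∞, and let t_∞ be a bounded operator on H such that t^k (t*)^k h → t_∞ h for every h ∈ H (t_∞ is the strong-operator limit of the decreasing sequence t^k(t*)^k). Then the limit L = lim_{k→∞} Tr(1 − t^k (t*)^k)/k exists, Tr((1 − t*t)^{1/2} (1 − t_∞) (1 − t*t)^{1/2}) is finite, and L + Tr((1 − t*t)^{1/2} (1 − t_∞) (1 − t*t)^{1/2}) = Tr(1 − tt*). -/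
open Filter Finset ContinuousLinearMap
open scoped ENNReal InnerProductSpace Topology

/-!
Let `d = (1 - t t*)^{1/2}` and `uⱼ = ‖tʲ d‖₂²` (squared Hilbert–Schmidt norm). Telescoping
`‖x‖² = ‖d x‖² + ‖t* x‖²` along the orbit `(t*)ʲ x` and using `‖X‖₂ = ‖X*‖₂` gives
`Tr(1 - tᵏ (t*)ᵏ) = u₀ + ⋯ + u_{k-1}`; as `u` decreases, the Cesàro means tend to `L = inf uⱼ`.
In the same way `‖y‖² = ‖c y‖² + ‖t y‖²` gives `uⱼ = ‖c tʲ d‖₂² + u_{j+1}`, and letting `k → ∞`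
in the first telescoping identity identifies `Tr(c (1 - t∞) c)` with `∑ⱼ ‖c tʲ d‖₂²`. Summing the
recursion yields `u₀ = ∑ⱼ ‖c tʲ d‖₂² + L`, where `u₀ = Tr(1 - t t*)`. Everything is computed in
`[0,∞]`, so no summability has to be checked.
-/

theorem one_sub_mul_star_self_nonneg {A : Type*} [CStarAlgebra A] [PartialOrder A]
    [StarOrderedRing A] {a : A} (ha : ‖a‖ ≤ 1) : 0 ≤ 1 - a * star a := by
  rw [sub_nonneg, ← CStarAlgebra.norm_le_one_iff_of_nonneg _ (mul_star_self_nonneg a),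
    CStarRing.norm_self_mul_star]
  exact mul_le_one₀ ha (norm_nonneg a) ha

theorem eq_sum_range_add_of_eq_add_succ {M : Type*} [AddCommMonoid M] {u v : ℕ → M}
    (h : ∀ j, u j = v j + u (j + 1)) (k : ℕ) : u 0 = ∑ j ∈ range k, v j + u k := by
  induction k with
  | zero => simp
  | succ k ih => rw [ih, h k, sum_range_succ, add_assoc]

namespace ENNReal

theorem tsum_add_iInf_eq_of_eq_add_succ {u v : ℕ → ℝ≥0∞} (h : ∀ j, u j = v j + u (j + 1)) :
    ∑' j, v j + ⨅ j, u j = u 0 := by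
  have hu : Antitone u := antitone_nat_of_succ_le fun j => (h j).symm ▸ le_add_self
  exact tendsto_nhds_unique ((ENNReal.tendsto_nat_tsum v).add (tendsto_atTop_iInf hu))
    (tendsto_const_nhds.congr (eq_sum_range_add_of_eq_add_succ h))

theorem tendsto_sum_range_div_of_antitone {u : ℕ → ℝ≥0∞} (hu : Antitone u) (h0 : u 0 ≠ ∞) :
    Tendsto (fun k : ℕ => (∑ j ∈ range k, u j) / k) atTop (𝓝 (⨅ j, u j)) := by
  have hfin : ∀ j, u j ≠ ∞ := fun j => ne_top_of_le_ne_top h0 (hu j.zero_le)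
  have hinf : ⨅ j, u j ≠ ∞ := ne_top_of_le_ne_top h0 (iInf_le u 0)
  have hreal : Tendsto (fun j => (u j).toReal) atTop (𝓝 (⨅ j, u j).toReal) :=
    (ENNReal.tendsto_toReal hinf).comp (tendsto_atTop_iInf hu)
  rw [← ENNReal.ofReal_toReal hinf]
  refine (ENNReal.tendsto_ofReal hreal.cesaro).congr' ?_
  filter_upwards [eventually_ge_atTop 1] with k hk
  rw [inv_mul_eq_div, ENNReal.ofReal_div_of_pos (by positivity), ENNReal.ofReal_natCast,
    ← ENNReal.toReal_sum fun j _ => hfin j,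
    ENNReal.ofReal_toReal (ENNReal.sum_ne_top.2 fun j _ => hfin j)]

end ENNReal

section InnerProductSpace

variable {𝕜 H ι : Type*} [RCLike 𝕜] [NormedAddCommGroup H] [InnerProductSpace 𝕜 H]

theorem HilbertBasis.tsum_enorm_inner_sq (b : HilbertBasis ι 𝕜 H) (x : H) :
    ∑' i, ‖⟪b i, x⟫_𝕜‖ₑ ^ 2 = ‖x‖ₑ ^ 2 := by
  have h : HasSum (fun i => ‖⟪b i, x⟫_𝕜‖ ^ 2) (‖x‖ ^ 2) := by
    simpa [b.repr_apply_apply] using lp.hasSum_norm (p := 2) (by norm_num) (b.repr x)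
  simp_rw [← ofReal_norm, ← ENNReal.ofReal_pow (norm_nonneg _)]
  rw [← ENNReal.ofReal_tsum_of_nonneg (fun i => by positivity) h.summable, h.tsum_eq]

noncomputable def hilbertSchmidtNormSq (b : HilbertBasis ι 𝕜 H) (X : H →L[𝕜] H) : ℝ≥0∞ :=
  ∑' i, ‖X (b i)‖ₑ ^ 2

theorem hilbertSchmidtNormSq_eq_add (b : HilbertBasis ι 𝕜 H) {c A : H →L[𝕜] H}
    (h : ∀ y, ‖y‖ₑ ^ 2 = ‖c y‖ₑ ^ 2 + ‖A y‖ₑ ^ 2) (X : H →L[𝕜] H) :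
    hilbertSchmidtNormSq b X =
      hilbertSchmidtNormSq b (c * X) + hilbertSchmidtNormSq b (A * X) := by
  simp_rw [hilbertSchmidtNormSq, mul_apply_eq_comp, ← ENNReal.tsum_add, ← h]

variable [CompleteSpace H]

theorem hilbertSchmidtNormSq_star (b : HilbertBasis ι 𝕜 H) (X : H →L[𝕜] H) :
    hilbertSchmidtNormSq b (star X) = hilbertSchmidtNormSq b X := by
  calc ∑' i, ‖star X (b i)‖ₑ ^ 2 = ∑' i, ∑' j, ‖⟪b j, star X (b i)⟫_𝕜‖ₑ ^ 2 := by
        simp_rw [b.tsum_enorm_inner_sq]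
    _ = ∑' j, ∑' i, ‖⟪b i, X (b j)⟫_𝕜‖ₑ ^ 2 := by
        rw [ENNReal.tsum_comm]
        congr 1 with j
        congr 1 with i
        rw [star_eq_adjoint, adjoint_inner_right, ← ofReal_norm, ← ofReal_norm, norm_inner_symm]
    _ = ∑' j, ‖X (b j)‖ₑ ^ 2 := by simp_rw [b.tsum_enorm_inner_sq]

theorem re_inner_one_sub_star_mul_self_apply (A : H →L[𝕜] H) (x : H) :
    RCLike.re ⟪x, (1 - star A * A) x⟫_𝕜 = ‖x‖ ^ 2 - ‖A x‖ ^ 2 := by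
  rw [sub_apply, inner_sub_right, map_sub, one_apply_eq_self, inner_self_eq_norm_sq,
    apply_norm_sq_eq_inner_adjoint_right]
  rfl

theorem norm_sq_eq_add_of_mul_self_eq {c A : H →L[𝕜] H} (hc : IsSelfAdjoint c)
    (h : c * c = 1 - star A * A) (x : H) : ‖x‖ ^ 2 = ‖c x‖ ^ 2 + ‖A x‖ ^ 2 := by
  have hcx : ‖c x‖ ^ 2 = ‖x‖ ^ 2 - ‖A x‖ ^ 2 := by
    rw [← re_inner_one_sub_star_mul_self_apply, ← h, apply_norm_sq_eq_inner_adjoint_right,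
      ← star_eq_adjoint, hc.star_eq]
    rfl
  linarith

theorem enorm_sq_eq_add_of_mul_self_eq {c A : H →L[𝕜] H} (hc : IsSelfAdjoint c)
    (h : c * c = 1 - star A * A) (x : H) : ‖x‖ₑ ^ 2 = ‖c x‖ₑ ^ 2 + ‖A x‖ₑ ^ 2 := by
  simp_rw [← ofReal_norm, ← ENNReal.ofReal_pow (norm_nonneg _)]
  rw [← ENNReal.ofReal_add (by positivity) (by positivity), ← norm_sq_eq_add_of_mul_self_eq hc h]

end InnerProductSpace

section Trace

variable {H ι : Type*} [NormedAddCommGroup H] [InnerProductSpace ℂ H] [CompleteSpace H]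
  (b : HilbertBasis ι ℂ H)

theorem opTrace_mul_mul_of_isSelfAdjoint {c : H →L[ℂ] H} (hc : IsSelfAdjoint c)
    (X : H →L[ℂ] H) :
    opTrace b (c * X * c) = ∑' i, ENNReal.ofReal (⟪c (b i), X (c (b i))⟫_ℂ).re := by
  refine tsum_congr fun i => ?_
  rw [mul_apply_eq_comp, mul_apply_eq_comp, ← adjoint_inner_left c, hc.adjoint_eq]

variable {A D : H →L[ℂ] H} (hD : ∀ y, ‖y‖ₑ ^ 2 = ‖D y‖ₑ ^ 2 + ‖A y‖ₑ ^ 2)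
include hD

theorem ofReal_re_inner_one_sub_star_pow_mul_pow (k : ℕ) (x : H) :
    ENNReal.ofReal (⟪x, (1 - star (A ^ k) * A ^ k) x⟫_ℂ).re
      = ∑ j ∈ range k, ‖D ((A ^ j) x)‖ₑ ^ 2 := by
  have htel : ‖x‖ₑ ^ 2 = ∑ j ∈ range k, ‖D ((A ^ j) x)‖ₑ ^ 2 + ‖(A ^ k) x‖ₑ ^ 2 := by
    simpa only [pow_zero, one_apply_eq_self] using
      eq_sum_range_add_of_eq_add_succ (u := fun j => ‖(A ^ j) x‖ₑ ^ 2)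
        (fun j => by rw [pow_succ' A j, mul_apply_eq_comp]; exact hD _) k
  rw [← RCLike.re_to_complex, re_inner_one_sub_star_mul_self_apply,
    ENNReal.ofReal_sub _ (by positivity)]
  simp_rw [ENNReal.ofReal_pow (norm_nonneg _), ofReal_norm, htel]
  exact ENNReal.add_sub_cancel_right (by simp)

theorem opTrace_one_sub_star_pow_mul_pow (k : ℕ) :
    opTrace b (1 - star (A ^ k) * A ^ k) =
      ∑ j ∈ range k, hilbertSchmidtNormSq b (D * A ^ j) := by
  simp_rw [opTrace, ofReal_re_inner_one_sub_star_pow_mul_pow hD, hilbertSchmidtNormSq,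
    mul_apply_eq_comp]
  exact Summable.tsum_finsetSum fun j _ => ENNReal.summable

theorem ofReal_re_inner_one_sub_of_tendsto {P : H →L[ℂ] H}
    (hP : ∀ y, Tendsto (fun k => (star (A ^ k) * A ^ k) y) atTop (𝓝 (P y))) (x : H) :
    ENNReal.ofReal (⟪x, (1 - P) x⟫_ℂ).re = ∑' j, ‖D ((A ^ j) x)‖ₑ ^ 2 := by
  refine tendsto_nhds_unique ?_ (ENNReal.tendsto_nat_tsum _)
  have hcont : Continuous fun z : H => ENNReal.ofReal (⟪x, z⟫_ℂ).re :=
    ENNReal.continuous_ofReal.comp (by fun_prop)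
  have hlim :
      Tendsto (fun k => (1 - star (A ^ k) * A ^ k : H →L[ℂ] H) x) atTop (𝓝 ((1 - P) x)) := by
    simpa only [sub_apply, one_apply_eq_self] using tendsto_const_nhds.sub (hP x)
  exact ((hcont.tendsto _).comp hlim).congr (ofReal_re_inner_one_sub_star_pow_mul_pow hD · x)

theorem opTrace_mul_one_sub_mul_of_tendsto {P c : H →L[ℂ] H}
    (hP : ∀ y, Tendsto (fun k => (star (A ^ k) * A ^ k) y) atTop (𝓝 (P y)))
    (hc : IsSelfAdjoint c) :
    opTrace b (c * (1 - P) * c) = ∑' j, hilbertSchmidtNormSq b (D * A ^ j * c) := by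
  simp_rw [opTrace_mul_mul_of_isSelfAdjoint b hc, ofReal_re_inner_one_sub_of_tendsto hD hP,
    hilbertSchmidtNormSq, mul_apply_eq_comp]
  exact ENNReal.tsum_comm

end Trace

/-- The Parrott–Levy formula: for a contraction `t` with `Tr(1 - t t*) < ∞`, with
`t∞` the strong-operator limit of `tᵏ (t*)ᵏ` and `c` the positive square root of
`1 - t* t`, the limit `L = lim Tr(1 - tᵏ (t*)ᵏ)/k` exists, `Tr(c (1 - t∞) c)` is
finite, and `L + Tr(c (1 - t∞) c) = Tr(1 - t t*)`. -/
theorem parrott_levy_formula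
    {H : Type*} [NormedAddCommGroup H] [InnerProductSpace ℂ H] [CompleteSpace H]
    {ι : Type*} (b : HilbertBasis ι ℂ H)
    (t : H →L[ℂ] H) (ht : ‖t‖ ≤ 1)
    (hfin : opTrace b (1 - t * star t) ≠ ⊤)
    (tinf : H →L[ℂ] H)
    (htinf : ∀ h : H,
      Filter.Tendsto (fun k => (t ^ k * (star t) ^ k) h) Filter.atTop (nhds (tinf h)))
    (c : H →L[ℂ] H) (hc : c.IsPositive) (hc2 : c * c = 1 - star t * t) :
    ∃ L : ℝ≥0∞,
      Filter.Tendsto (fun (k : ℕ) => opTrace b (1 - t ^ k * (star t) ^ k) / (k : ℝ≥0∞))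
        Filter.atTop (nhds L) ∧
      opTrace b (c * (1 - tinf) * c) ≠ ⊤ ∧
      L + opTrace b (c * (1 - tinf) * c) = opTrace b (1 - t * star t) := by
  obtain ⟨d, hd, hdd⟩ : ∃ d : H →L[ℂ] H, IsSelfAdjoint d ∧ d * d = 1 - t * star t :=
    ⟨CFC.sqrt _, .of_nonneg (CFC.sqrt_nonneg _),
      CFC.sqrt_mul_sqrt_self _ (one_sub_mul_star_self_nonneg ht)⟩
  have hD := enorm_sq_eq_add_of_mul_self_eq hd (A := star t) (by rwa [star_star])
  have hC := enorm_sq_eq_add_of_mul_self_eq hc.isSelfAdjoint hc2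
  have hpow : ∀ k, star (star t ^ k) = t ^ k := fun k => by rw [star_pow, star_star]
  set U : ℕ → ℝ≥0∞ := fun j => hilbertSchmidtNormSq b (t ^ j * d)
  set V : ℕ → ℝ≥0∞ := fun j => hilbertSchmidtNormSq b (c * (t ^ j * d))
  have htrace (k : ℕ) : opTrace b (1 - t ^ k * star t ^ k) = ∑ j ∈ range k, U j := by
    rw [← hpow, opTrace_one_sub_star_pow_mul_pow b hD]
    refine sum_congr rfl fun j _ => ?_
    rw [← hilbertSchmidtNormSq_star, star_mul, hpow, hd.star_eq]
  have hdefect : opTrace b (c * (1 - tinf) * c) = ∑' j, V j := by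
    simp_rw [← hpow] at htinf
    rw [opTrace_mul_one_sub_mul_of_tendsto b hD htinf hc.isSelfAdjoint]
    refine tsum_congr fun j => ?_
    rw [← hilbertSchmidtNormSq_star, star_mul, star_mul, hpow, hd.star_eq,
      hc.isSelfAdjoint.star_eq]
  have hstep (j : ℕ) : U j = V j + U (j + 1) := by
    rw [show U j = _ from hilbertSchmidtNormSq_eq_add b hC (t ^ j * d), ← mul_assoc t,
      ← pow_succ']
  have hU0 : U 0 = opTrace b (1 - t * star t) := by simpa using (htrace 1).symm
  have hsum : ∑' j, V j + ⨅ j, U j = U 0 := ENNReal.tsum_add_iInf_eq_of_eq_add_succ hstep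
  refine ⟨⨅ j, U j, ?_, ?_, ?_⟩
  · simp_rw [htrace]
    exact ENNReal.tendsto_sum_range_div_of_antitone
      (antitone_nat_of_succ_le fun j => (hstep j).symm ▸ le_add_self) (hU0 ▸ hfin)
  · rw [hdefect]
    exact ne_top_of_le_ne_top (hU0 ▸ hfin) (hsum ▸ le_self_add)
  · rw [hdefect, add_comm, hsum, hU0]
end
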